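/- For every Hurst parameter H ∈ (0,1), the fractional Brownian motion covariance R_H(t,s) = (1/2)(t^{2H} + s^{2H} − |t − s|^{2H}) is a positive semidefinite kernel on [0,∞): for every n ∈ ℕ, all times t_1, …, t_n ≥ 0 and all real numbers a_1, …, a_n, one has ∑_{i=1}^n ∑_{j=1}^n a_i a_j R_H(t_i, t_j) ≥ 0. -/

import Mathlib

open Finset

/-- The covariance function of fractional Brownian motion with Hurst parameter `H`:
`R_H(t,s) = (1/2)(t^{2H} + s^{2H} - |t-s|^{2H})`. -/
noncomputable def fbmCov (H t s : ℝ) : ℝ :=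
  (1/2) * (t ^ (2*H) + s ^ (2*H) - |t - s| ^ (2*H))

open MeasureTheory Real Set

lemma fbm_integrable {α : ℝ} (hα1 : 0 < α) (hα2 : α < 2) (c : ℝ) :
    IntegrableOn (fun u : ℝ => (1 - Real.cos (c * u)) * u ^ (-1 - α)) (Ioi 0) := by
  have hmeas : ∀ s : Set ℝ, s ⊆ Ioi 0 → MeasurableSet s →
      AEStronglyMeasurable (fun u : ℝ => (1 - Real.cos (c * u)) * u ^ (-1 - α))
        (volume.restrict s) := by
    intro s hs hms
    apply ContinuousOn.aestronglyMeasurable ?_ hms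
    apply ContinuousOn.mul (by fun_prop)
    intro x hx
    exact (Real.continuousAt_rpow_const x _ (Or.inl (ne_of_gt (hs hx)))).continuousWithinAt
  have h01 : IntegrableOn (fun u : ℝ => (1 - Real.cos (c * u)) * u ^ (-1 - α)) (Ioc 0 1) := by
    have hg : IntegrableOn (fun u : ℝ => (c ^ 2 / 2) * u ^ (1 - α)) (Ioc 0 1) := by
      have := (intervalIntegral.intervalIntegrable_rpow' (r := 1 - α) (by linarith)
        (a := 0) (b := 1))
      rw [intervalIntegrable_iff, uIoc_of_le zero_le_one] at this
      exact this.const_mul _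
    refine hg.mono' (hmeas _ Ioc_subset_Ioi_self measurableSet_Ioc) ?_
    filter_upwards [ae_restrict_mem measurableSet_Ioc] with u hu
    have hu0 : 0 < u := hu.1
    have h1 : 0 ≤ 1 - Real.cos (c * u) := by nlinarith [Real.cos_le_one (c * u)]
    have h2 : (0:ℝ) < u ^ (-1 - α) := Real.rpow_pos_of_pos hu0 _
    rw [Real.norm_eq_abs, abs_of_nonneg (mul_nonneg h1 h2.le)]
    have hb : 1 - Real.cos (c * u) ≤ (c * u) ^ 2 / 2 := by
      nlinarith [Real.one_sub_sq_div_two_le_cos (x := c * u)]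
    calc (1 - Real.cos (c * u)) * u ^ (-1 - α) ≤ ((c * u) ^ 2 / 2) * u ^ (-1 - α) := by
          exact mul_le_mul_of_nonneg_right hb h2.le
      _ = (c ^ 2 / 2) * (u ^ (2:ℝ) * u ^ (-1 - α)) := by
          rw [Real.rpow_two]; ring
      _ = (c ^ 2 / 2) * u ^ (1 - α) := by
          rw [← Real.rpow_add hu0, show (2:ℝ) + (-1 - α) = 1 - α by ring]
  have h1i : IntegrableOn (fun u : ℝ => (1 - Real.cos (c * u)) * u ^ (-1 - α)) (Ioi 1) := by
    have hg : IntegrableOn (fun u : ℝ => 2 * u ^ (-1 - α)) (Ioi 1) :=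
      (integrableOn_Ioi_rpow_of_lt (by linarith) one_pos).const_mul 2
    refine hg.mono' (hmeas _ (fun x hx => Set.mem_Ioi.mpr (lt_trans one_pos (Set.mem_Ioi.mp hx))) measurableSet_Ioi) ?_
    filter_upwards [ae_restrict_mem measurableSet_Ioi] with u hu
    have hu0 : (0:ℝ) < u := lt_trans one_pos hu
    have h1 : 0 ≤ 1 - Real.cos (c * u) := by nlinarith [Real.cos_le_one (c * u)]
    have h2 : (0:ℝ) < u ^ (-1 - α) := Real.rpow_pos_of_pos hu0 _
    rw [Real.norm_eq_abs, abs_of_nonneg (mul_nonneg h1 h2.le)]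
    have : 1 - Real.cos (c * u) ≤ 2 := by nlinarith [Real.neg_one_le_cos (c * u)]
    nlinarith
  have : Set.Ioi (0:ℝ) = Set.Ioc 0 1 ∪ Set.Ioi 1 := (Set.Ioc_union_Ioi_eq_Ioi zero_le_one).symm
  rw [this]
  exact h01.union h1i

lemma fbm_scaling {α : ℝ} (hα1 : 0 < α) (hα2 : α < 2) {c : ℝ} (hc : 0 ≤ c) :
    ∫ u in Ioi 0, (1 - Real.cos (c * u)) * u ^ (-1 - α)
      = c ^ α * ∫ u in Ioi 0, (1 - Real.cos u) * u ^ (-1 - α) := by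
  rcases eq_or_lt_of_le hc with h0 | hc
  · simp [← h0, Real.zero_rpow hα1.ne']
  have hkey : ∀ u ∈ Ioi (0:ℝ), (1 - Real.cos (c * u)) * u ^ (-1 - α)
      = c ^ (1 + α) * ((1 - Real.cos (c * u)) * (c * u) ^ (-1 - α)) := by
    intro u hu
    rw [Real.mul_rpow hc.le (le_of_lt hu)]
    have : c ^ (1 + α) * c ^ (-1 - α) = 1 := by
      rw [← Real.rpow_add hc, show (1 + α) + (-1 - α) = 0 by ring, Real.rpow_zero]
    linear_combination (-((1 - Real.cos (c * u)) * u ^ (-1 - α))) * this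
  rw [setIntegral_congr_fun measurableSet_Ioi hkey, MeasureTheory.integral_const_mul,
    MeasureTheory.integral_comp_mul_left_Ioi (fun v => (1 - Real.cos v) * v ^ (-1 - α)) 0 hc,
    mul_zero, smul_eq_mul, ← mul_assoc]
  congr 1
  rw [Real.rpow_add hc, Real.rpow_one]
  field_simp

lemma fbm_const_pos {α : ℝ} (hα1 : 0 < α) (hα2 : α < 2) :
    0 < ∫ u in Ioi 0, (1 - Real.cos u) * u ^ (-1 - α) := by
  have hint : IntegrableOn (fun u : ℝ => (1 - Real.cos u) * u ^ (-1 - α)) (Ioi 0) := by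
    simpa using fbm_integrable hα1 hα2 1
  have hsub : Ioc (π/2) π ⊆ Ioi (0:ℝ) := fun x hx => lt_trans (by positivity) hx.1
  have hnonneg : 0 ≤ᵐ[volume.restrict (Ioi (0:ℝ))]
      (fun u : ℝ => (1 - Real.cos u) * u ^ (-1 - α)) := by
    filter_upwards [ae_restrict_mem measurableSet_Ioi] with u hu
    show (0:ℝ) ≤ (1 - Real.cos u) * u ^ (-1 - α)
    have := Real.cos_le_one u
    have := Real.rpow_pos_of_pos (show (0:ℝ) < u from hu) (-1 - α)
    nlinarith
  have hmono := setIntegral_mono_set hint hnonneg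
    (HasSubset.Subset.eventuallyLE hsub)
  refine lt_of_lt_of_le ?_ hmono
  have hlt : π/2 < π := by linarith [Real.pi_pos]
  rw [← intervalIntegral.integral_of_le hlt.le]
  apply intervalIntegral.intervalIntegral_pos_of_pos_on
  · rw [intervalIntegrable_iff, uIoc_of_le hlt.le]
    exact hint.mono_set hsub
  · intro x hx
    have hx0 : (0:ℝ) < x := lt_trans (by positivity) hx.1
    have hcos : Real.cos x ≤ 0 :=
      Real.cos_nonpos_of_pi_div_two_le_of_le hx.1.le (by linarith [Real.pi_pos, hx.2])
    have := Real.rpow_pos_of_pos hx0 (-1 - α)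
    nlinarith
  · exact hlt

lemma fbm_pair {α : ℝ} (hα1 : 0 < α) (hα2 : α < 2) {x y : ℝ} (hx : 0 ≤ x) (hy : 0 ≤ y) :
    ∫ u in Ioi 0, ((1 - Real.cos (x*u)) * (1 - Real.cos (y*u))
        + Real.sin (x*u) * Real.sin (y*u)) * u ^ (-1 - α)
      = (x ^ α + y ^ α - |x - y| ^ α) * ∫ u in Ioi 0, (1 - Real.cos u) * u ^ (-1 - α) := by
  have hid : ∀ u ∈ Ioi (0:ℝ),
      ((1 - Real.cos (x*u)) * (1 - Real.cos (y*u))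
        + Real.sin (x*u) * Real.sin (y*u)) * u ^ (-1 - α)
      = (1 - Real.cos (x*u)) * u ^ (-1 - α) + (1 - Real.cos (y*u)) * u ^ (-1 - α)
        - (1 - Real.cos (|x - y| * u)) * u ^ (-1 - α) := by
    intro u hu
    have habs : |x - y| * u = |(x - y) * u| := by
      rw [abs_mul, abs_of_nonneg (le_of_lt (Set.mem_Ioi.mp hu))]
    rw [habs, Real.cos_abs, show (x - y) * u = x*u - y*u by ring, Real.cos_sub]
    ring
  have hxint := fbm_integrable hα1 hα2 x
  have hyint := fbm_integrable hα1 hα2 y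
  have hadd : IntegrableOn (fun u : ℝ => (1 - Real.cos (x*u)) * u ^ (-1 - α)
      + (1 - Real.cos (y*u)) * u ^ (-1 - α)) (Ioi 0) := hxint.add hyint
  rw [setIntegral_congr_fun measurableSet_Ioi hid,
    integral_sub hadd (fbm_integrable hα1 hα2 |x - y|),
    integral_add hxint hyint,
    fbm_scaling hα1 hα2 hx, fbm_scaling hα1 hα2 hy,
    fbm_scaling hα1 hα2 (abs_nonneg (x - y))]
  ring

/-- For `H ∈ (0,1)`, the fBm covariance is a positive semidefinite kernel on `[0,∞)`. -/
theorem stmt_6 (H : ℝ) (hH : H ∈ Set.Ioo (0:ℝ) 1)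
    (n : ℕ) (t : Fin n → ℝ) (ht : ∀ i, 0 ≤ t i) (a : Fin n → ℝ) :
    0 ≤ ∑ i, ∑ j, a i * a j * fbmCov H (t i) (t j) := by
  obtain ⟨hH0, hH1⟩ := hH
  have hα1 : 0 < 2*H := by linarith
  have hα2 : 2*H < 2 := by linarith
  set α := 2*H with hαdef
  set G := ∫ u in Ioi 0, (1 - Real.cos u) * u ^ (-1 - α) with hGdef
  have hG : 0 < G := fbm_const_pos hα1 hα2
  set F : Fin n → Fin n → ℝ → ℝ := fun i j u =>
    a i * a j * (((1 - Real.cos (t i * u)) * (1 - Real.cos (t j * u))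
      + Real.sin (t i * u) * Real.sin (t j * u)) * u ^ (-1 - α)) with hF
  have hterm : ∀ i j : Fin n, IntegrableOn (F i j) (Ioi 0) := by
    intro i j
    have base : IntegrableOn (fun u : ℝ =>
        a i * a j * ((1 - Real.cos (t i * u)) * u ^ (-1 - α)
          + (1 - Real.cos (t j * u)) * u ^ (-1 - α)
          - (1 - Real.cos (|t i - t j| * u)) * u ^ (-1 - α))) (Ioi 0) :=
      (((fbm_integrable hα1 hα2 (t i)).add (fbm_integrable hα1 hα2 (t j))).sub
        (fbm_integrable hα1 hα2 |t i - t j|)).const_mul _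
    refine base.congr_fun ?_ measurableSet_Ioi
    intro u hu
    have habs : |t i - t j| * u = |(t i - t j) * u| := by
      rw [abs_mul, abs_of_nonneg (le_of_lt (Set.mem_Ioi.mp hu))]
    rw [hF]
    simp only
    rw [habs, Real.cos_abs, show (t i - t j) * u = t i * u - t j * u by ring, Real.cos_sub]
    ring
  have hval : ∀ i j : Fin n, ∫ u in Ioi 0, F i j u
      = a i * a j * (2 * fbmCov H (t i) (t j) * G) := by
    intro i j
    rw [hF]
    simp only
    rw [MeasureTheory.integral_const_mul, fbm_pair hα1 hα2 (ht i) (ht j)]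
    simp only [fbmCov, ← hGdef, ← hαdef]
    ring
  have key : 0 ≤ ∑ i, ∑ j, a i * a j * (2 * fbmCov H (t i) (t j) * G) := by
    have h1 : ∑ i, ∑ j, a i * a j * (2 * fbmCov H (t i) (t j) * G)
        = ∫ u in Ioi 0, ∑ i, ∑ j, F i j u := by
      rw [integral_finset_sum _ (fun i _ => integrable_finset_sum _ (fun j _ => hterm i j))]
      refine Finset.sum_congr rfl fun i _ => ?_
      rw [integral_finset_sum _ (fun j _ => hterm i j)]
      exact Finset.sum_congr rfl fun j _ => (hval i j).symm
    rw [h1]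
    apply setIntegral_nonneg measurableSet_Ioi
    intro u hu
    have hw : (0:ℝ) ≤ u ^ (-1 - α) := (Real.rpow_pos_of_pos hu _).le
    have hexp : ∑ i, ∑ j, F i j u
        = ((∑ i, a i * (1 - Real.cos (t i * u))) ^ 2
          + (∑ i, a i * Real.sin (t i * u)) ^ 2) * u ^ (-1 - α) := by
      rw [sq, sq, Finset.sum_mul_sum, Finset.sum_mul_sum, ← Finset.sum_add_distrib,
        Finset.sum_mul]
      refine Finset.sum_congr rfl fun i _ => ?_
      rw [← Finset.sum_add_distrib, Finset.sum_mul]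
      exact Finset.sum_congr rfl fun j _ => by rw [hF]; ring
    rw [hexp]
    positivity
  have h2 : ∑ i, ∑ j, a i * a j * (2 * fbmCov H (t i) (t j) * G)
      = (2*G) * ∑ i, ∑ j, a i * a j * fbmCov H (t i) (t j) := by
    rw [Finset.mul_sum]
    refine Finset.sum_congr rfl fun i _ => ?_
    rw [Finset.mul_sum]
    exact Finset.sum_congr rfl fun j _ => by ring
  rw [h2] at key
  by_contra hS
  push_neg at hS
  nlinarith [mul_pos hG (neg_pos.mpr hS)]
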